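/- Under the exchangeable Gaussian model with common correlation ρ ∈ (0,1) and with ρ̂ = (1 - s_n^2)·I(s_n^2 < 1), for any sequence a_n = o(n) one has √(a_n)·(√(1-ρ) - √(1-ρ̂)) → 0 in probability as n → ∞. -/

import Mathlib

/-!
Writing `X i = √ρ Z₀ + √(1-ρ) Zᵢ`, the common factor cancels in the sample variance, so
`s_n² = (1-ρ) V_n` with `V_n` the sample variance of `n` i.i.d. standard normals. Since
`1 - ρ̂ = min (s_n²) 1` and `1 - ρ ∈ (0, 1)`, one has
`|√(1-ρ) - √(1-ρ̂)| ≤ √(1-ρ) |V_n - 1|`, so it suffices that `√a_n (V_n - 1) → 0` in probability.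
Now `(n-1)(V_n - 1) = (∑ Zᵢ² - n) + (n - (∑ Zᵢ)²) / n`: the first term has variance `O(n)`
(Chebyshev), the second has mean absolute value `O(1)` (Markov), and both are negligible after
multiplying by `√a_n / (n-1)` because `a_n = o(n)`.
-/

open MeasureTheory ProbabilityTheory Real Filter

/-- Unbiased sample variance of an `n`-tuple of reals. -/
noncomputable def sampleVar (n : ℕ) (x : Fin n → ℝ) : ℝ :=
  (1 / ((n : ℝ) - 1)) * ∑ i, (x i - (∑ j, x j) / n) ^ 2

/-- The exchangeable standard Gaussian model, given through its one-factor
representation: `X i = √ρ · Z 0 + √(1-ρ) · Z (i+1)` for `Z` i.i.d. `N(0,1)`,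
which yields a jointly normal vector with mean `0`, unit variances and
common pairwise correlation `ρ` (covariance `(1-ρ)·I + ρ·J`). -/
def IsEquicorrGaussian {Ω : Type*} [MeasureSpace Ω] (n : ℕ) (ρ : ℝ)
    (X : Fin n → Ω → ℝ) : Prop :=
  ∃ Z : ℕ → Ω → ℝ,
    iIndepFun Z ℙ ∧
    (∀ i, Measure.map (Z i) ℙ = gaussianReal 0 1) ∧
    (∀ i, Measurable (Z i)) ∧
    (∀ i ω, X i ω = Real.sqrt ρ * Z 0 ω + Real.sqrt (1 - ρ) * Z (i + 1) ω)

open Topology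
open scoped ENNReal

lemma sum_sub_mean_sq (n : ℕ) (x : Fin n → ℝ) :
    ∑ i, (x i - (∑ j, x j) / n) ^ 2 = ∑ i, x i ^ 2 - (∑ i, x i) ^ 2 / n := by
  rcases eq_or_ne n 0 with rfl | hn
  · simp
  simp only [sub_sq, Finset.sum_add_distrib, Finset.sum_sub_distrib, ← Finset.sum_mul,
    ← Finset.mul_sum, Finset.sum_const, Finset.card_univ, Fintype.card_fin, nsmul_eq_mul]
  field_simp
  ring

lemma sampleVar_nonneg (n : ℕ) (x : Fin n → ℝ) : 0 ≤ sampleVar n x := by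
  rcases n with _ | n
  · simp [sampleVar]
  exact mul_nonneg (by simp) (Finset.sum_nonneg fun i _ => sq_nonneg _)

lemma sampleVar_const_add_mul (n : ℕ) (c b : ℝ) (x : Fin n → ℝ) :
    sampleVar n (fun i => c + b * x i) = b ^ 2 * sampleVar n x := by
  rcases eq_or_ne n 0 with rfl | hn
  · simp [sampleVar]
  have hsum : ∑ j, (c + b * x j) = n * c + b * ∑ j, x j := by
    simp [Finset.sum_add_distrib, Finset.mul_sum]
  have hterm : ∀ i, (c + b * x i - (n * c + b * ∑ j, x j) / n) ^ 2
      = b ^ 2 * (x i - (∑ j, x j) / n) ^ 2 := fun i => by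
    field_simp
    ring
  simp only [sampleVar, hsum, hterm, ← Finset.mul_sum]
  ring

lemma sampleVar_sub_eq {n : ℕ} (hn : 2 ≤ n) (x : Fin n → ℝ) (σ2 : ℝ) :
    sampleVar n x - σ2 = (∑ i, x i ^ 2 - n * σ2) / (n - 1)
      + (n * σ2 - (∑ i, x i) ^ 2) / (n * (n - 1)) := by
  have hn1 : (n : ℝ) - 1 ≠ 0 := sub_ne_zero.2 (Nat.cast_ne_one.2 (by omega))
  have hn0 : (n : ℝ) ≠ 0 := Nat.cast_ne_zero.2 (by omega)
  rw [sampleVar, sum_sub_mean_sq]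
  field_simp
  ring

lemma one_sub_mul_ite_lt_one (s : ℝ) :
    1 - (1 - s) * (if s < 1 then (1 : ℝ) else 0) = min s 1 := by
  split_ifs with h
  · simp [min_eq_left h.le]
  · simp [min_eq_right (not_lt.mp h)]

lemma abs_sqrt_sub_sqrt_le {u y : ℝ} (hu : 0 < u) (hy : 0 ≤ y) :
    |√u - √y| ≤ |u - y| / √u := by
  have hsu : 0 < √u := Real.sqrt_pos.mpr hu
  rw [le_div_iff₀ hsu]
  calc |√u - √y| * √u ≤ |√u - √y| * (√u + √y) := by
        gcongr
        exact le_add_of_nonneg_right (Real.sqrt_nonneg y)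
    _ = |u - y| := by
        rw [← abs_of_pos (add_pos_of_pos_of_nonneg hsu (Real.sqrt_nonneg y)), ← abs_mul,
          mul_comm, ← sq_sub_sq, Real.sq_sqrt hu.le, Real.sq_sqrt hy]

lemma abs_sub_min_mul_one_le {u V : ℝ} (hu0 : 0 ≤ u) (hu1 : u ≤ 1) (hV : 0 ≤ V) :
    |u - min (u * V) 1| ≤ u * |V - 1| := by
  rcases le_total (u * V) 1 with h | h
  · rw [min_eq_left h, ← mul_one_sub, abs_mul, abs_of_nonneg hu0, abs_sub_comm]
  · rw [min_eq_right h, abs_of_nonpos (by linarith), abs_of_nonneg (by nlinarith)]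
    linarith

lemma abs_sqrt_sub_sqrt_min_le {u V : ℝ} (hu0 : 0 < u) (hu1 : u ≤ 1) (hV : 0 ≤ V) :
    |√u - √(min (u * V) 1)| ≤ √u * |V - 1| := by
  calc |√u - √(min (u * V) 1)| ≤ |u - min (u * V) 1| / √u :=
        abs_sqrt_sub_sqrt_le hu0 (le_min (by positivity) zero_le_one)
    _ ≤ u * |V - 1| / √u := by gcongr; exact abs_sub_min_mul_one_le hu0.le hu1 hV
    _ = √u * |V - 1| := by
        rw [div_eq_iff (Real.sqrt_pos.mpr hu0).ne', mul_right_comm, Real.mul_self_sqrt hu0.le]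

namespace MeasureTheory

variable {α ι E F : Type*} {m : MeasurableSpace α} {μ : Measure α} {l : Filter ι}

theorem TendstoInMeasure.add [SeminormedAddCommGroup E] {f f' : ι → α → E} {g g' : α → E}
    (hf : TendstoInMeasure μ f l g) (hf' : TendstoInMeasure μ f' l g') :
    TendstoInMeasure μ (f + f') l (g + g') := by
  rw [tendstoInMeasure_iff_norm] at hf hf' ⊢
  intro ε hε
  have hsub : ∀ i, {x | ε ≤ ‖(f + f') i x - (g + g') x‖}
      ⊆ {x | ε / 2 ≤ ‖f i x - g x‖} ∪ {x | ε / 2 ≤ ‖f' i x - g' x‖} := by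
    intro i x hx
    by_contra h
    simp only [Set.mem_union, Set.mem_ofPred_eq, not_or, not_le] at h hx
    have hsplit : (f + f') i x - (g + g') x = (f i x - g x) + (f' i x - g' x) := by
      simp only [Pi.add_apply]
      abel
    rw [hsplit] at hx
    linarith [norm_add_le (f i x - g x) (f' i x - g' x)]
  have hlim := (hf (ε / 2) (half_pos hε)).add (hf' (ε / 2) (half_pos hε))
  rw [add_zero] at hlim
  exact tendsto_of_tendsto_of_tendsto_of_le_of_le tendsto_const_nhds hlim (fun _ => zero_le)
    fun i => (measure_mono (hsub i)).trans (measure_union_le _ _)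

theorem TendstoInMeasure.of_norm_le_mul [SeminormedAddCommGroup E] [SeminormedAddCommGroup F]
    {f : ι → α → E} {g : ι → α → F} {C : ℝ} (hg : TendstoInMeasure μ g l 0)
    (hfg : ∀ᶠ i in l, ∀ᵐ x ∂μ, ‖f i x‖ ≤ C * ‖g i x‖) :
    TendstoInMeasure μ f l 0 := by
  rw [tendstoInMeasure_iff_norm] at hg ⊢
  intro ε hε
  have hC : 0 < max C 1 := lt_max_of_lt_right one_pos
  refine tendsto_of_tendsto_of_tendsto_of_le_of_le' tendsto_const_nhds
    (hg (ε / max C 1) (by positivity)) (Eventually.of_forall fun _ => zero_le) ?_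
  filter_upwards [hfg] with i hi
  refine measure_mono_ae ?_
  filter_upwards [hi] with x hx hxε
  replace hxε : ε ≤ ‖f i x - (0 : α → E) x‖ := hxε
  show ε / max C 1 ≤ ‖g i x - (0 : α → F) x‖
  simp only [Pi.zero_apply, sub_zero] at hxε ⊢
  rw [div_le_iff₀ hC, mul_comm]
  calc ε ≤ C * ‖g i x‖ := hxε.trans hx
    _ ≤ max C 1 * ‖g i x‖ := by gcongr; exact le_max_left _ _

theorem tendstoInMeasure_of_integral_tendsto_zero [IsFiniteMeasure μ] {f : ι → α → ℝ}
    (hf0 : ∀ i, 0 ≤ᵐ[μ] f i) (hf : ∀ i, Integrable (f i) μ)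
    (hlim : Tendsto (fun i => ∫ x, f i x ∂μ) l (𝓝 0)) :
    TendstoInMeasure μ f l 0 := by
  rw [tendstoInMeasure_iff_measureReal_norm]
  intro ε hε
  refine tendsto_of_tendsto_of_tendsto_of_le_of_le tendsto_const_nhds
    (by simpa using hlim.div_const ε) (fun _ => measureReal_nonneg) fun i => ?_
  rw [le_div_iff₀' hε]
  calc ε * μ.real {x | ε ≤ ‖f i x - (0 : α → ℝ) x‖} = ε * μ.real {x | ε ≤ f i x} := by
        congr 1
        refine measureReal_congr ?_
        filter_upwards [hf0 i] with x (hx : 0 ≤ f i x)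
        change (ε ≤ ‖f i x - 0‖) = (ε ≤ f i x)
        rw [sub_zero, Real.norm_of_nonneg hx]
    _ ≤ ∫ x, f i x ∂μ := mul_meas_ge_le_integral_of_nonneg (hf0 i) (hf i) ε

theorem tendstoInMeasure_sub_integral_of_variance [IsFiniteMeasure μ] {f : ι → α → ℝ}
    (hf : ∀ i, MemLp (f i) 2 μ) (hvar : Tendsto (fun i => Var[f i; μ]) l (𝓝 0)) :
    TendstoInMeasure μ (fun i x => f i x - μ[f i]) l 0 := by
  rw [tendstoInMeasure_iff_norm]
  intro ε hε
  have hlim : Tendsto (fun i => ENNReal.ofReal (Var[f i; μ] / ε ^ 2)) l (𝓝 0) := by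
    simpa using ENNReal.tendsto_ofReal (hvar.div_const (ε ^ 2))
  refine tendsto_of_tendsto_of_tendsto_of_le_of_le tendsto_const_nhds hlim (fun _ => zero_le)
    fun i => ?_
  simpa using meas_ge_le_variance_div_sq (hf i) hε

end MeasureTheory

namespace ProbabilityTheory

lemma HasLaw.memLp_comp {Ω 𝓧 E : Type*} {mΩ : MeasurableSpace Ω} {m𝓧 : MeasurableSpace 𝓧}
    [NormedAddCommGroup E] {P : Measure Ω} {μ : Measure 𝓧} {X : Ω → 𝓧} {f : 𝓧 → E} {p : ℝ≥0∞}
    (hX : HasLaw X μ P) (hf : MemLp f p μ) : MemLp (f ∘ X) p P := by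
  rw [← hX.map_eq] at hf
  exact (memLp_map_measure_iff hf.1 hX.aemeasurable).1 hf

section RowMoments

variable {Ω ι : Type*} [MeasureSpace Ω] {ν : Measure ℝ} {X : Ω → ℝ}

lemma HasLaw.integral_sq (hν0 : ∫ x, x ∂ν = 0) (hX : HasLaw X ν) :
    ∫ ω, X ω ^ 2 = Var[id; ν] := by
  rw [← hX.variance_eq, variance_of_integral_eq_zero hX.aemeasurable (hX.integral_eq.trans hν0)]

lemma HasLaw.variance_sq (hX : HasLaw X ν) :
    Var[fun ω => X ω ^ 2; ℙ] = Var[fun x => x ^ 2; ν] := by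
  rw [← hX.map_eq, variance_map (by fun_prop) hX.aemeasurable]
  rfl

lemma HasLaw.memLp_two_sq (hν : MemLp id 4 ν) (hX : HasLaw X ν) :
    MemLp (fun ω => X ω ^ 2) 2 ℙ := by
  have h42 : (4 : ℝ≥0∞) / 2 = 2 :=
    ((ENNReal.eq_div_iff two_ne_zero ENNReal.ofNat_ne_top).2 (by norm_num)).symm
  simpa [h42] using (hX.memLp_comp hν).norm_rpow_div 2

variable [Fintype ι] {Z : ι → Ω → ℝ}

lemma variance_sum_sq_of_hasLaw (hν : MemLp id 4 ν) (hZ : ∀ i, HasLaw (Z i) ν)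
    (hind : Pairwise fun i j => IndepFun (Z i) (Z j)) :
    Var[fun ω => ∑ i, Z i ω ^ 2; ℙ] = Fintype.card ι * Var[fun x => x ^ 2; ν] := by
  have hsum : (fun ω => ∑ i, Z i ω ^ 2) = ∑ i, fun ω => Z i ω ^ 2 := by
    ext ω
    simp
  rw [hsum, IndepFun.variance_sum (fun i _ => (hZ i).memLp_two_sq hν)
    fun i _ j _ hij => (hind hij).comp (measurable_id.pow_const 2) (measurable_id.pow_const 2)]
  simp [(hZ _).variance_sq]

variable [IsFiniteMeasure (ℙ : Measure Ω)]

lemma HasLaw.memLp_two (hν : MemLp id 4 ν) (hX : HasLaw X ν) : MemLp X 2 ℙ :=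
  (hX.memLp_comp hν).mono_exponent (by norm_num)

lemma integral_sum_sq_of_hasLaw (hν : MemLp id 4 ν) (hν0 : ∫ x, x ∂ν = 0)
    (hZ : ∀ i, HasLaw (Z i) ν) :
    ∫ ω, ∑ i, Z i ω ^ 2 = Fintype.card ι * Var[id; ν] := by
  rw [integral_finsetSum _ fun i _ => ((hZ i).memLp_two_sq hν).integrable one_le_two]
  simp [(hZ _).integral_sq hν0]

lemma integral_sq_sum_of_hasLaw (hν : MemLp id 4 ν) (hν0 : ∫ x, x ∂ν = 0)
    (hZ : ∀ i, HasLaw (Z i) ν) (hind : Pairwise fun i j => IndepFun (Z i) (Z j)) :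
    ∫ ω, (∑ i, Z i ω) ^ 2 = Fintype.card ι * Var[id; ν] := by
  have hmean : ℙ[∑ i, Z i] = 0 := by
    simp_rw [Finset.sum_apply]
    rw [integral_finsetSum _ fun i _ => ((hZ i).memLp_two hν).integrable one_le_two]
    simp [(hZ _).integral_eq, hν0]
  calc ∫ ω, (∑ i, Z i ω) ^ 2 = Var[∑ i, Z i; ℙ] := by
        rw [variance_of_integral_eq_zero (by fun_prop) hmean]
        simp [Finset.sum_apply]
    _ = Fintype.card ι * Var[id; ν] := by
        rw [IndepFun.variance_sum (fun i _ => (hZ i).memLp_two hν) fun i _ j _ hij => hind hij]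
        simp [(hZ _).variance_eq]

end RowMoments

end ProbabilityTheory

section SampleVarianceConcentration

lemma tendsto_div_natCast_sub_one_sq_mul {b : ℕ → ℝ}
    (hb : (fun n => b n ^ 2) =o[atTop] fun n => (n : ℝ)) :
    Tendsto (fun n : ℕ => (b n / (n - 1)) ^ 2 * n) atTop (𝓝 0) := by
  have hratio : Tendsto (fun n : ℕ => (n : ℝ) / (n - 1)) atTop (𝓝 1) := by
    simpa [← sub_eq_add_neg] using tendsto_natCast_div_add_atTop (-1 : ℝ)
  have hlim := hb.tendsto_div_nhds_zero.mul (hratio.pow 2)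
  rw [zero_mul] at hlim
  refine hlim.congr' ?_
  filter_upwards [eventually_ge_atTop 2] with n hn
  have hn1 : (n : ℝ) - 1 ≠ 0 := sub_ne_zero.2 (Nat.cast_ne_one.2 (by omega))
  have hn0 : (n : ℝ) ≠ 0 := Nat.cast_ne_zero.2 (by omega)
  field_simp

lemma tendsto_div_natCast_sub_one {b : ℕ → ℝ}
    (hb : (fun n => b n ^ 2) =o[atTop] fun n => (n : ℝ)) :
    Tendsto (fun n : ℕ => b n / (n - 1)) atTop (𝓝 0) := by
  have hlim := (tendsto_div_natCast_sub_one_sq_mul hb).sqrt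
  rw [Real.sqrt_zero] at hlim
  refine squeeze_zero_norm' ?_ hlim
  filter_upwards [eventually_ge_atTop 1] with n hn
  rw [Real.norm_eq_abs, ← Real.sqrt_sq_eq_abs]
  exact Real.sqrt_le_sqrt (le_mul_of_one_le_right (sq_nonneg _) (by exact_mod_cast hn))

variable {Ω : Type*} [MeasureSpace Ω] [IsProbabilityMeasure (ℙ : Measure Ω)] {ν : Measure ℝ}
  {Z : (n : ℕ) → Fin n → Ω → ℝ}

theorem tendstoInMeasure_mul_sum_sq_sub (hν : MemLp id 4 ν) (hν0 : ∫ x, x ∂ν = 0)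
    (hZ : ∀ n i, HasLaw (Z n i) ν) (hind : ∀ n, Pairwise fun i j => IndepFun (Z n i) (Z n j))
    {c : ℕ → ℝ} (hc : Tendsto (fun n => c n ^ 2 * n) atTop (𝓝 0)) :
    TendstoInMeasure ℙ (fun n ω => c n * (∑ i, Z n i ω ^ 2 - n * Var[id; ν])) atTop 0 := by
  refine TendstoInMeasure.congr_left (fun n => ae_of_all _ fun ω => ?_)
    (tendstoInMeasure_sub_integral_of_variance (f := fun n ω => c n * ∑ i, Z n i ω ^ 2)
      (fun n => (memLp_finsetSum _ fun i _ => (hZ n i).memLp_two_sq hν).const_mul (c n)) ?_)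
  · rw [integral_const_mul, integral_sum_sq_of_hasLaw hν hν0 (hZ n), Fintype.card_fin]
    ring
  · simp_rw [variance_const_mul, variance_sum_sq_of_hasLaw hν (hZ _) (hind _), Fintype.card_fin,
      ← mul_assoc]
    simpa using hc.mul_const (Var[fun x => x ^ 2; ν])

theorem tendstoInMeasure_mul_sub_sq_sum (hν : MemLp id 4 ν) (hν0 : ∫ x, x ∂ν = 0)
    (hZ : ∀ n i, HasLaw (Z n i) ν) (hind : ∀ n, Pairwise fun i j => IndepFun (Z n i) (Z n j))
    {c : ℕ → ℝ} (hc : Tendsto c atTop (𝓝 0)) :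
    TendstoInMeasure ℙ
      (fun n ω => c n * ((n * Var[id; ν] - (∑ i, Z n i ω) ^ 2) / n)) atTop 0 := by
  set σ2 := Var[id; ν]
  have hσ2 : 0 ≤ σ2 := variance_nonneg _ _
  have hint : ∀ n, Integrable (fun ω => (∑ i, Z n i ω) ^ 2) ℙ := fun n =>
    (memLp_finsetSum _ fun i _ => (hZ n i).memLp_two hν).integrable_sq
  refine TendstoInMeasure.of_norm_le_mul (C := 1)
    (g := fun n ω => |c n| * ((n * σ2 + (∑ i, Z n i ω) ^ 2) / n)) ?_ ?_
  · refine tendstoInMeasure_of_integral_tendsto_zero (fun n => ae_of_all _ fun ω => by positivity)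
      (fun n => (((integrable_const _).add (hint n)).div_const _).const_mul _) ?_
    have hlim := hc.abs.mul_const (2 * σ2)
    rw [abs_zero, zero_mul] at hlim
    refine hlim.congr' ?_
    filter_upwards [eventually_ne_atTop 0] with n hn
    have hn0 : (n : ℝ) ≠ 0 := Nat.cast_ne_zero.2 hn
    rw [integral_const_mul, integral_div, integral_add (integrable_const _) (hint n),
      integral_const, integral_sq_sum_of_hasLaw hν hν0 (hZ n) (hind n), Fintype.card_fin]
    simp only [probReal_univ, one_smul]
    field_simp
    ring
  · refine Eventually.of_forall fun n => ae_of_all _ fun ω => ?_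
    have hnσ2 : 0 ≤ n * σ2 := by positivity
    rw [one_mul, Real.norm_eq_abs, Real.norm_eq_abs, abs_mul, abs_mul, abs_abs]
    gcongr _ * ?_
    rw [abs_div, abs_div, abs_of_nonneg (by positivity : 0 ≤ n * σ2 + (∑ i, Z n i ω) ^ 2)]
    gcongr
    exact abs_sub_le_of_nonneg_of_le hnσ2 (le_add_of_nonneg_right (sq_nonneg _)) (sq_nonneg _)
      (le_add_of_nonneg_left hnσ2)

theorem tendstoInMeasure_mul_sampleVar_sub_variance (hν : MemLp id 4 ν)
    (hν0 : ∫ x, x ∂ν = 0) (hZ : ∀ n i, HasLaw (Z n i) ν)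
    (hind : ∀ n, Pairwise fun i j => IndepFun (Z n i) (Z n j)) {b : ℕ → ℝ}
    (hb : (fun n => b n ^ 2) =o[atTop] fun n => (n : ℝ)) :
    TendstoInMeasure ℙ (fun n ω => b n * (sampleVar n (fun i => Z n i ω) - Var[id; ν]))
      atTop 0 := by
  have hsplit := (tendstoInMeasure_mul_sum_sq_sub hν hν0 hZ hind
    (tendsto_div_natCast_sub_one_sq_mul hb)).add
    (tendstoInMeasure_mul_sub_sq_sum hν hν0 hZ hind (tendsto_div_natCast_sub_one hb))
  refine hsplit.congr' ?_ (by simp)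
  filter_upwards [eventually_ge_atTop 2] with n hn
  refine ae_of_all _ fun ω => ?_
  have hn1 : (n : ℝ) - 1 ≠ 0 := sub_ne_zero.2 (Nat.cast_ne_one.2 (by omega))
  have hn0 : (n : ℝ) ≠ 0 := Nat.cast_ne_zero.2 (by omega)
  simp only [Pi.add_apply, sampleVar_sub_eq hn]
  field_simp

end SampleVarianceConcentration

/-- Theorem 1: with `ρ̂ = (1 - s_n²)·I(s_n² < 1)` and `a_n = o(n)`,
`√(a_n)·(√(1-ρ) - √(1-ρ̂)) → 0` in probability. -/
theorem stmt8 {Ω : Type*} [MeasureSpace Ω] [IsProbabilityMeasure (ℙ : Measure Ω)]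
    (ρ : ℝ) (hρ0 : 0 < ρ) (hρ1 : ρ < 1)
    (X : (n : ℕ) → Fin n → Ω → ℝ) (hX : ∀ n, IsEquicorrGaussian n ρ (X n))
    (a : ℕ → ℝ) (ha0 : ∀ n, 0 ≤ a n) (ha : a =o[atTop] fun n => (n : ℝ)) :
    TendstoInMeasure ℙ
      (fun n ω =>
        Real.sqrt (a n) *
          (Real.sqrt (1 - ρ) -
            Real.sqrt (1 - (1 - sampleVar n (fun i => X n i ω)) *
              (if sampleVar n (fun i => X n i ω) < 1 then (1 : ℝ) else 0))))
      atTop (fun _ => (0 : ℝ)) := by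
  choose Z hZind hZlaw hZmeas hZrep using hX
  have hu : 0 < 1 - ρ := by linarith
  have hsampleVar : ∀ n ω, sampleVar n (fun i => X n i ω)
      = (1 - ρ) * sampleVar n (fun i => Z n (i + 1) ω) := fun n ω => by
    simp only [hZrep, sampleVar_const_add_mul, Real.sq_sqrt hu.le]
  have hb : (fun n => √(a n) ^ 2) =o[atTop] fun n => (n : ℝ) := by
    simpa only [Real.sq_sqrt (ha0 _)] using ha
  have hconc := tendstoInMeasure_mul_sampleVar_sub_variance (memLp_id_gaussianReal 4)
    integral_id_gaussianReal (Z := fun n i => Z n (i + 1))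
    (fun n i => ⟨(hZmeas n _).aemeasurable, hZlaw n _⟩)
    (fun n i j hij => (hZind n).indepFun (by simpa [Fin.val_inj] using hij)) hb
  rw [variance_id_gaussianReal, NNReal.coe_one] at hconc
  refine hconc.of_norm_le_mul (C := √(1 - ρ))
    (Eventually.of_forall fun n => ae_of_all _ fun ω => ?_)
  rw [one_sub_mul_ite_lt_one, hsampleVar, Real.norm_eq_abs, Real.norm_eq_abs, abs_mul, abs_mul,
    abs_of_nonneg (Real.sqrt_nonneg _)]
  calc √(a n) * |√(1 - ρ) - √(min ((1 - ρ) * sampleVar n (fun i => Z n (i + 1) ω)) 1)|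
      ≤ √(a n) * (√(1 - ρ) * |sampleVar n (fun i => Z n (i + 1) ω) - 1|) := by
        gcongr
        exact abs_sqrt_sub_sqrt_min_le hu (by linarith) (sampleVar_nonneg _ _)
    _ = _ := by ring
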